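/- arXiv:1610.06161 — 3 statements merged into one kernel-verified Lean document; each statement's English description precedes it below -/
import Mathlib

section
/- Let p and q be distinct primes, let A be an elementary abelian group of order p², and let V be a finite-dimensional vector space over the field 𝔽_q = ℤ/qℤ equipped with a linear action of A. Then V is the sum of the fixed-point subspaces of the non-identity elements of A: V = Σ_{a ∈ A, a ≠ 1} C_V(a), where C_V(a) = {v ∈ V : a · v = v}. -/
/-- Let `p ≠ q` be primes, `A` an elementary abelian group of order `p ^ 2`,
and `V` a finite-dimensional `𝔽_q`-vector space with a linear action `ρ` of `A`.
Then `V` is the sum of the fixed-point subspaces `C_V(a) = ker (ρ a - id)` of the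
nontrivial elements `a ∈ A`. -/
theorem stmt_2 {p q : ℕ} (hp : p.Prime) (hq : q.Prime) (hpq : p ≠ q)
    (A : Type*) [CommGroup A] [Fintype A]
    (hA : Fintype.card A = p ^ 2) (hexp : ∀ a : A, a ^ p = 1)
    (V : Type*) [AddCommGroup V] [Module (ZMod q) V] [Module.Finite (ZMod q) V]
    (ρ : Representation (ZMod q) A V) :
    (⨆ a ∈ {a : A | a ≠ 1}, LinearMap.ker (ρ a - LinearMap.id)) = ⊤ := by
  classical
  haveI := Fact.mk hq
  set S := ⨆ a ∈ {a : A | a ≠ 1}, LinearMap.ker (ρ a - LinearMap.id) with hSdef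
  rw [eq_top_iff]
  rintro v -
  -- order of nonidentity elements is p
  have horder : ∀ a : A, a ≠ 1 → orderOf a = p := by
    intro a ha
    rcases (hp.eq_one_or_self_of_dvd _ (orderOf_dvd_of_pow_eq_one (hexp a))) with h | h
    · exact absurd (orderOf_eq_one_iff.mp h) ha
    · exact h
  -- membership criterion
  have hmem : ∀ a : A, a ≠ 1 → ∀ w : V, ρ a w = w → w ∈ S := by
    intro a ha w hw
    apply Submodule.mem_iSup_of_mem a
    apply Submodule.mem_iSup_of_mem (show a ∈ {a : A | a ≠ 1} from ha)
    simp [LinearMap.mem_ker, sub_eq_zero, hw]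
  -- sums over subgroups are fixed
  have hfix : ∀ (B : Subgroup A) (c : A), c ∈ B →
      ρ c (∑ g ∈ Finset.univ.filter (· ∈ B), ρ g v)
        = ∑ g ∈ Finset.univ.filter (· ∈ B), ρ g v := by
    intro B c hc
    rw [map_sum]
    have key : ∀ g, ρ c (ρ g v) = ρ (c * g) v := by
      intro g; rw [map_mul]; rfl
    simp_rw [key]
    apply Finset.sum_nbij' (fun g => c * g) (fun g => c⁻¹ * g)
    · intro a ha
      simp only [Finset.mem_filter, Finset.mem_univ, true_and] at ha ⊢
      exact B.mul_mem hc ha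
    · intro a ha
      simp only [Finset.mem_filter, Finset.mem_univ, true_and] at ha ⊢
      exact B.mul_mem (B.inv_mem hc) ha
    · intro a _; simp
    · intro a _; simp
    · intro a _; rfl
  -- the collection of subgroups of order p
  set 𝒮 : Finset (Subgroup A) :=
    (Finset.univ.filter (fun a : A => a ≠ 1)).image (fun a => Subgroup.zpowers a) with h𝒮
  have hScard : ∀ B ∈ 𝒮, Nat.card B = p := by
    intro B hB
    simp only [h𝒮, Finset.mem_image, Finset.mem_filter, Finset.mem_univ, true_and] at hB
    obtain ⟨a, ha, rfl⟩ := hB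
    rw [Nat.card_zpowers, horder a ha]
  have hunique : ∀ B ∈ 𝒮, ∀ g : A, g ∈ B → g ≠ 1 → B = Subgroup.zpowers g := by
    intro B hB g hg hg1
    refine (Subgroup.eq_of_le_of_card_ge ((Subgroup.zpowers_le).mpr hg) ?_).symm
    rw [hScard B hB, Nat.card_zpowers, horder g hg1]
  -- the biUnion identity
  have hU : 𝒮.biUnion (fun B => Finset.univ.filter (fun g => g ∈ B ∧ g ≠ 1))
      = Finset.univ.filter (fun g : A => g ≠ 1) := by
    ext g
    simp only [Finset.mem_biUnion, Finset.mem_filter, Finset.mem_univ, true_and]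
    constructor
    · rintro ⟨B, _, _, hg1⟩; exact hg1
    · intro hg1
      refine ⟨Subgroup.zpowers g, ?_, Subgroup.mem_zpowers g, hg1⟩
      simp only [h𝒮, Finset.mem_image, Finset.mem_filter, Finset.mem_univ, true_and]
      exact ⟨g, hg1, rfl⟩
  have hdisj : (𝒮 : Set (Subgroup A)).PairwiseDisjoint
      (fun B => Finset.univ.filter (fun g => g ∈ B ∧ g ≠ 1)) := by
    intro B hB B' hB' hne
    refine Finset.disjoint_left.mpr ?_
    intro g hg hg'
    simp only [Finset.mem_filter, Finset.mem_univ, true_and] at hg hg'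
    exact hne ((hunique B hB g hg.1 hg.2).trans (hunique B' hB' g hg'.1 hg'.2).symm)
  -- counting
  have hcard1 : (Finset.univ.filter (fun g : A => g ≠ 1)).card = p ^ 2 - 1 := by
    rw [Finset.filter_ne', Finset.card_erase_of_mem (Finset.mem_univ 1), Finset.card_univ, hA]
  have hcardB : ∀ B ∈ 𝒮,
      (Finset.univ.filter (fun g => g ∈ B ∧ g ≠ 1)).card = p - 1 := by
    intro B hB
    have h1 : Finset.univ.filter (fun g => g ∈ B ∧ g ≠ 1)
        = (Finset.univ.filter (fun g : A => g ∈ B)).erase 1 := by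
      ext g; simp [and_comm]
    rw [h1, Finset.card_erase_of_mem (by simp [B.one_mem])]
    congr 1
    rw [← Fintype.card_subtype, ← Nat.card_eq_fintype_card, hScard B hB]
  have hScount : 𝒮.card = p + 1 := by
    have h2 : 𝒮.card * (p - 1) = p ^ 2 - 1 := by
      rw [← hcard1, ← hU, Finset.card_biUnion hdisj]
      rw [Finset.sum_congr rfl hcardB, Finset.sum_const, smul_eq_mul]
    have h3 : p ^ 2 - 1 = (p + 1) * (p - 1) := by
      rw [← one_pow 2, Nat.sq_sub_sq, one_pow]
    rw [h3] at h2
    have hp2 := hp.two_le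
    exact Nat.eq_of_mul_eq_mul_right (by omega) h2
  -- the main identity
  have hmain : ∑ B ∈ 𝒮, (∑ g ∈ Finset.univ.filter (· ∈ B), ρ g v)
      = 𝒮.card • v + ∑ g ∈ Finset.univ.filter (fun g : A => g ≠ 1), ρ g v := by
    have step : ∀ B ∈ 𝒮, ∑ g ∈ Finset.univ.filter (· ∈ B), ρ g v
        = v + ∑ g ∈ Finset.univ.filter (fun g => g ∈ B ∧ g ≠ 1), ρ g v := by
      intro B hB
      have h1 : Finset.univ.filter (fun g => g ∈ B ∧ g ≠ 1)
          = (Finset.univ.filter (fun g : A => g ∈ B)).erase 1 := by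
        ext g; simp [and_comm]
      rw [h1, ← Finset.add_sum_erase _ (fun g => ρ g v)
        (show (1:A) ∈ Finset.univ.filter (fun g : A => g ∈ B) by simp [B.one_mem])]
      simp
    rw [Finset.sum_congr rfl step, Finset.sum_add_distrib, Finset.sum_const,
      ← hU, Finset.sum_biUnion hdisj]
  -- each subgroup sum lies in S
  have hBS : ∀ B ∈ 𝒮, ∑ g ∈ Finset.univ.filter (· ∈ B), ρ g v ∈ S := by
    intro B hB
    have hB' := hB
    simp only [h𝒮, Finset.mem_image, Finset.mem_filter, Finset.mem_univ, true_and] at hB'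
    obtain ⟨a, ha, rfl⟩ := hB'
    exact hmem a ha _ (hfix _ a (Subgroup.mem_zpowers a))
  -- the total sum lies in S
  have hTS : ∑ g : A, ρ g v ∈ S := by
    obtain ⟨a, ha⟩ := Fintype.exists_ne_of_one_lt_card
      (by rw [hA]; exact Nat.one_lt_pow (by norm_num) hp.one_lt) (1 : A)
    have : ∑ g : A, ρ g v = ∑ g ∈ Finset.univ.filter (· ∈ (⊤ : Subgroup A)), ρ g v := by
      congr 1; ext g; simp
    rw [this]
    exact hmem a ha _ (hfix ⊤ a (Subgroup.mem_top a))
  -- conclude: p • v ∈ S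
  have hpv : (p : ℕ) • v ∈ S := by
    have h5 : (p : ℕ) • v = (∑ B ∈ 𝒮, ∑ g ∈ Finset.univ.filter (· ∈ B), ρ g v)
        - ∑ g : A, ρ g v := by
      have h6 : ∑ g ∈ Finset.univ.filter (fun g : A => g ≠ 1), ρ g v
          = (∑ g : A, ρ g v) - v := by
        rw [Finset.filter_ne', Finset.sum_erase_eq_sub (Finset.mem_univ 1)]
        simp
      rw [hmain, hScount, h6, succ_nsmul]
      abel
    rw [h5]
    exact Submodule.sub_mem _ (Submodule.sum_mem _ hBS) hTS
  -- divide by p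
  have hcast : ((p : ℕ) : ZMod q) ≠ 0 := by
    rw [Ne, ZMod.natCast_eq_zero_iff]
    exact fun h => hpq ((Nat.prime_dvd_prime_iff_eq hq hp).mp h).symm
  have hv : v = ((p : ZMod q))⁻¹ • (((p : ℕ) : ZMod q) • v) := by
    rw [smul_smul, inv_mul_cancel₀ hcast, one_smul]
  rw [hv, Nat.cast_smul_eq_nsmul]
  exact Submodule.smul_mem _ _ hpv
end

section
/- Let G be a finite group, p a prime, and S a Sylow p-subgroup of G, and let H = {g ∈ G : gSg⁻¹ is joined to S by a path in Γ_p(G)} (the setwise stabilizer in G of the connected component of Γ_p(G) containing the vertex S). Then H is a subgroup of G, and for every g ∈ G such that p divides |H ∩ gHg⁻¹|, one has g ∈ H. -/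
/-- The graph `Γ_p(G)` whose vertices are the Sylow `p`-subgroups of `G`, two distinct
Sylow `p`-subgroups being adjacent exactly when their intersection is nontrivial. -/
def sylowGraph (p : ℕ) (G : Type*) [Group G] : SimpleGraph (Sylow p G) where
  Adj P Q := P ≠ Q ∧ (P : Subgroup G) ⊓ (Q : Subgroup G) ≠ ⊥
  symm := ⟨fun P Q h => ⟨h.1.symm, by rw [inf_comm]; exact h.2⟩⟩
  loopless := ⟨fun P h => h.1 rfl⟩

/-!
The set of `g` with `g • S` in the component of `S` is the stabilizer of that component under
the conjugation action, hence a subgroup `H`; it contains `S`, so `S` is a Sylow subgroup of `H`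
and every `p`-element of `H` lies in an `H`-conjugate of `S`. Now take `x ∈ H ∩ gHg⁻¹` of order
`p`. Then `x ∈ h₁ • S` and `g⁻¹xg ∈ h₂ • S` with `h₁, h₂ ∈ H`, so `x ≠ 1` lies in both `h₁ • S`
and `(g h₂) • S`. These two vertices are therefore adjacent or equal, which puts `g h₂`, and
with it `g`, in `H`.
-/

open Pointwise Subgroup

namespace Sylow

variable {p : ℕ} {G : Type*} [Group G]

theorem mem_smul_iff {g x : G} {P : Sylow p G} :
    x ∈ ((g • P : Sylow p G) : Subgroup G) ↔ g⁻¹ * x * g ∈ P := by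
  rw [coe_subgroup_smul, mem_pointwise_smul_iff_inv_smul_mem, ← MulAut.conj_inv_apply]
  rfl

theorem exists_le_smul_of_le [Fact p.Prime] [Finite G] {S : Sylow p G} {H K : Subgroup G}
    (hSH : (S : Subgroup G) ≤ H) (hKH : K ≤ H) (hK : IsPGroup p K) :
    ∃ h ∈ H, K ≤ ((h • S : Sylow p G) : Subgroup G) := by
  obtain ⟨P, hP⟩ := (hK.comap_of_injective H.subtype H.subtype_injective).exists_le_sylow
  obtain ⟨h, rfl⟩ := MulAction.exists_smul_eq H (S.subtype hSH) P
  rw [smul_subtype, coe_subtype] at hP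
  exact ⟨h, h.2, fun k hk => hP (show ⟨k, hKH hk⟩ ∈ K.subgroupOf H from hk)⟩

end Sylow

namespace sylowGraph

variable {p : ℕ} {G : Type*} [Group G]

theorem adj_smul (g : G) {P Q : Sylow p G} (h : (sylowGraph p G).Adj P Q) :
    (sylowGraph p G).Adj (g • P) (g • Q) := by
  refine ⟨fun he => h.1 (smul_left_cancel g he), fun hbot => h.2 ?_⟩
  rw [Sylow.coe_subgroup_smul, Sylow.coe_subgroup_smul, ← smul_inf] at hbot
  exact smul_left_cancel _ (hbot.trans (smul_bot _).symm)

theorem reachable_smul (g : G) {P Q : Sylow p G} (h : (sylowGraph p G).Reachable P Q) :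
    (sylowGraph p G).Reachable (g • P) (g • Q) :=
  h.map ⟨(g • ·), adj_smul g⟩

theorem reachable_of_mem_of_mem {P Q : Sylow p G} {x : G} (hx : x ≠ 1) (hP : x ∈ P)
    (hQ : x ∈ Q) : (sylowGraph p G).Reachable P Q := by
  by_cases hPQ : P = Q
  · rw [hPQ]
  · exact SimpleGraph.Adj.reachable
      ⟨hPQ, ne_bot_iff_exists_ne_one.mpr ⟨⟨x, hP, hQ⟩, mt (congrArg Subtype.val) hx⟩⟩

def componentStabilizer (S : Sylow p G) : Subgroup G where
  carrier := {g | (sylowGraph p G).Reachable (g • S) S}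
  one_mem' := by simp
  mul_mem' {a b} ha hb := by
    simp only [Set.mem_ofPred_eq, mul_smul] at ha hb ⊢
    exact (reachable_smul a hb).trans ha
  inv_mem' {a} ha := by
    simpa using (reachable_smul a⁻¹ ha).symm

variable {S : Sylow p G}

theorem mem_componentStabilizer {g : G} :
    g ∈ componentStabilizer S ↔ (sylowGraph p G).Reachable (g • S) S :=
  Iff.rfl

theorem le_componentStabilizer : (S : Subgroup G) ≤ componentStabilizer S := fun s hs => by
  rw [mem_componentStabilizer, Sylow.smul_eq_iff_mem_normalizer.mpr (le_normalizer hs)]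

theorem mem_componentStabilizer_of_mem_inf_map [Fact p.Prime] [Finite G] {g x : G}
    (hx1 : x ≠ 1) (hxp : IsPGroup p (zpowers x))
    (hx : x ∈ componentStabilizer S ⊓ (componentStabilizer S).map (MulAut.conj g).toMonoidHom) :
    g ∈ componentStabilizer S := by
  obtain ⟨hxH, hxgH⟩ := mem_inf.mp hx
  rw [mem_map_equiv, MulAut.conj_symm_apply] at hxgH
  have hyp : IsPGroup p (zpowers (g⁻¹ * x * g)) :=
    hxp.map (MulAut.conj g⁻¹).toMonoidHom |>.to_le <| by
      rw [MonoidHom.map_zpowers, MulEquiv.coe_toMonoidHom, MulAut.conj_apply, inv_inv]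
  obtain ⟨h₁, hh₁, hxh₁⟩ :=
    Sylow.exists_le_smul_of_le le_componentStabilizer (zpowers_le.mpr hxH) hxp
  obtain ⟨h₂, hh₂, hyh₂⟩ :=
    Sylow.exists_le_smul_of_le le_componentStabilizer (zpowers_le.mpr hxgH) hyp
  have hxgh₂ : x ∈ (((g * h₂) • S : Sylow p G) : Subgroup G) := by
    have hy := Sylow.mem_smul_iff.mp (hyh₂ (mem_zpowers _))
    rw [Sylow.mem_smul_iff]
    convert hy using 1
    group
  have hgh₂ : g * h₂ ∈ componentStabilizer S :=
    (reachable_of_mem_of_mem hx1 (hxh₁ (mem_zpowers x)) hxgh₂).symm.trans hh₁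
  simpa using mul_mem hgh₂ (inv_mem hh₂)

end sylowGraph

/-- Let `G` be a finite group, `p` a prime, `S` a Sylow `p`-subgroup of `G`,
and `H = {g ∈ G | g • S is joined to S by a path in Γ_p(G)}` the setwise stabilizer of the
connected component of `Γ_p(G)` containing `S`.  Then `H` is a subgroup of `G`, and every
`g ∈ G` with `p ∣ |H ∩ gHg⁻¹|` lies in `H`. -/
theorem stmt_4 {p : ℕ} (hp : p.Prime) (G : Type*) [Group G] [Finite G]
    (S : Sylow p G) :
    ∃ H : Subgroup G,
      (H : Set G) = {g : G | (sylowGraph p G).Reachable (g • S) S} ∧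
      ∀ g : G, p ∣ Nat.card ↥(H ⊓ Subgroup.map (MulAut.conj g).toMonoidHom H) → g ∈ H := by
  have : Fact p.Prime := ⟨hp⟩
  refine ⟨sylowGraph.componentStabilizer S, rfl, fun g hdvd => ?_⟩
  obtain ⟨x, hord⟩ := exists_prime_orderOf_dvd_card' p hdvd
  rw [← orderOf_submonoid] at hord
  have hx1 : (x : G) ≠ 1 := fun h => hp.ne_one (by rw [← hord, h, orderOf_one])
  have hxp : IsPGroup p (zpowers (x : G)) :=
    IsPGroup.of_card (n := 1) (by rw [Nat.card_zpowers, hord, pow_one])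
  exact sylowGraph.mem_componentStabilizer_of_mem_inf_map hx1 hxp x.2
end

section
/- Let G be a finite group, p a prime, X a strongly p-embedded subgroup of G, and S a Sylow p-subgroup of G with S ≤ X. Then every Sylow p-subgroup Q of G that is joined to S by a path in Γ_p(G) satisfies Q ≤ X; consequently X contains the setwise stabilizer H = {g ∈ G : gSg⁻¹ is joined to S by a path in Γ_p(G)} of the connected component of Γ_p(G) containing the vertex S. -/
/-!
Let `X` be strongly `p`-embedded. If a `p`-subgroup `P` meets `X` nontrivially but `P ⊓ X < P`,
then `P ⊓ X` is properly normalized in the nilpotent group `P`; an element `g ∈ P \ X` of that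
normalizer gives `P ⊓ X ≤ X ⊓ gXg⁻¹`, forcing `g ∈ X`. Hence `P ≤ X`, so containment in `X`
propagates along edges of `Γ_p(G)` and thus over the whole component of `S`. Finally, if
`gSg⁻¹ ≤ X` then `gSg⁻¹ ≤ X ⊓ gXg⁻¹`, and `p ∣ |S|` gives `g ∈ X`.
-/

open Pointwise

namespace Subgroup

theorem le_of_isPGroup_of_inf_ne_bot {p : ℕ} [Fact p.Prime] {G : Type*} [Group G] [Finite G]
    {X : Subgroup G}
    (hXemb : ∀ g : G, p ∣ Nat.card ↥(X ⊓ Subgroup.map (MulAut.conj g).toMonoidHom X) → g ∈ X)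
    {P : Subgroup G} (hP : IsPGroup p P) (hPX : P ⊓ X ≠ ⊥) : P ≤ X := by
  suffices h : X.subgroupOf P = ⊤ from subgroupOf_eq_top.mp h
  by_contra hne
  have : Group.IsNilpotent P := hP.isNilpotent
  obtain ⟨g, hg_norm, hgX⟩ := SetLike.exists_of_lt <|
    Group.normalizerCondition_of_isNilpotent _ (lt_top_iff_ne_top.mpr hne)
  have h_le_conj : P ⊓ X ≤ X ⊓ Subgroup.map (MulAut.conj (g : G)).toMonoidHom X := by
    refine le_inf inf_le_right fun y ⟨hyP, hyX⟩ => ⟨g⁻¹ * y * g, ?_, by simp [mul_assoc]⟩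
    have := (mem_normalizer_iff.mp (inv_mem hg_norm) ⟨y, hyP⟩).mp hyX
    simpa [mul_assoc, mem_subgroupOf] using this
  have hp_dvd : p ∣ Nat.card ↥(P ⊓ X) :=
    ((hP.to_le inf_le_left).card_eq_or_dvd).resolve_left
      fun h => hPX (card_eq_one.mp h)
  exact hgX (hXemb g (hp_dvd.trans (card_dvd_of_le h_le_conj)))

theorem mem_of_le_of_conj_le {p : ℕ} {G : Type*} [Group G] {X : Subgroup G}
    (hXemb : ∀ g : G, p ∣ Nat.card ↥(X ⊓ Subgroup.map (MulAut.conj g).toMonoidHom X) → g ∈ X)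
    {P : Subgroup G} (hP : p ∣ Nat.card P) (hPX : P ≤ X) {g : G}
    (hgPX : MulAut.conj g • P ≤ X) : g ∈ X := by
  have hcard : Nat.card ↥(MulAut.conj g • P) = Nat.card P :=
    Nat.card_congr (equivSMul _ P).toEquiv.symm
  exact hXemb g <| (hcard ▸ hP).trans <| card_dvd_of_le <| le_inf hgPX (map_mono hPX)

end Subgroup

theorem sylowGraph.le_of_reachable {p : ℕ} [Fact p.Prime] {G : Type*} [Group G] [Finite G]
    {X : Subgroup G}
    (hXemb : ∀ g : G, p ∣ Nat.card ↥(X ⊓ Subgroup.map (MulAut.conj g).toMonoidHom X) → g ∈ X)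
    {Q R : Sylow p G} (h : (sylowGraph p G).Reachable Q R) (hR : (R : Subgroup G) ≤ X) :
    (Q : Subgroup G) ≤ X := by
  obtain ⟨w⟩ := h
  induction w with
  | nil => exact hR
  | cons hadj _ ih =>
    refine Subgroup.le_of_isPGroup_of_inf_ne_bot hXemb (Sylow.isPGroup' _) fun hbot => ?_
    exact hadj.2 (le_bot_iff.mp (hbot ▸ inf_le_inf_left _ (ih hR)))

theorem stmt_8_general {p : ℕ} (hp : p.Prime) (G : Type*) [Group G] [Finite G]
    (X : Subgroup G) (hXp : p ∣ Nat.card X)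
    (hXemb : ∀ g : G, p ∣ Nat.card ↥(X ⊓ Subgroup.map (MulAut.conj g).toMonoidHom X) → g ∈ X)
    (S : Sylow p G) (hSX : (S : Subgroup G) ≤ X) :
    (∀ Q : Sylow p G, (sylowGraph p G).Reachable Q S → (Q : Subgroup G) ≤ X) ∧
      ∀ g : G, (sylowGraph p G).Reachable (g • S) S → g ∈ X := by
  have : Fact p.Prime := ⟨hp⟩
  have hpS : p ∣ Nat.card S := S.dvd_card_of_dvd_card (hXp.trans X.card_subgroup_dvd_card)
  refine ⟨fun Q hQ => sylowGraph.le_of_reachable hXemb hQ hSX, fun g hg => ?_⟩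
  have hgS := sylowGraph.le_of_reachable hXemb hg hSX
  rw [Sylow.coe_subgroup_smul] at hgS
  exact Subgroup.mem_of_le_of_conj_le hXemb hpS hSX hgS

/-- Let `X` be a strongly `p`-embedded subgroup of a finite group `G` and
`S` a Sylow `p`-subgroup of `G` with `S ≤ X`.  Then every Sylow `p`-subgroup of `G` joined
to `S` by a path in `Γ_p(G)` is contained in `X`; consequently `X` contains the setwise
stabilizer `H = {g ∈ G | g • S is joined to S in Γ_p(G)}` of the connected component of
`Γ_p(G)` containing `S`. -/
theorem stmt_8 {p : ℕ} (hp : p.Prime) (G : Type*) [Group G] [Finite G]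
    (X : Subgroup G) (hXne : X ≠ ⊤) (hXp : p ∣ Nat.card X)
    (hXemb : ∀ g : G, p ∣ Nat.card ↥(X ⊓ Subgroup.map (MulAut.conj g).toMonoidHom X) → g ∈ X)
    (S : Sylow p G) (hSX : (S : Subgroup G) ≤ X) :
    (∀ Q : Sylow p G, (sylowGraph p G).Reachable Q S → (Q : Subgroup G) ≤ X) ∧
      ∀ g : G, (sylowGraph p G).Reachable (g • S) S → g ∈ X :=
  stmt_8_general hp G X hXp hXemb S hSX
end
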